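/- Let ι be a finite set, w : ι → ℝ with w(i) ≥ 0 for all i, and B ∈ ℝ. Suppose S ⊆ ι and j ∈ ι \ S satisfy: (i) Σ_{k ∈ S} w(k) ≤ B; (ii) Σ_{k ∈ S} w(k) + w(j) > B; (iii) w(i) ≥ w(j) for every i ∈ ι \ S; and (iv) w(j) ≥ w(k) for every k ∈ S. Then every subset T ⊆ ι with Σ_{k ∈ T} w(k) ≤ B satisfies |T| ≤ |S|. (This is the optimality of DMP without vector update for problem P2: the set obtained by repeatedly deleting a maximum-weight element until the weight budget is met has maximum cardinality among all budget-feasible subsets.) -/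
import Mathlib


/-- Optimality of greedy deletion of maximum-weight elements (problem P2):
if `S` satisfies the budget, adding the last deleted element `j` would exceed the
budget, all elements outside `S` weigh at least `w j`, and all elements of `S` weigh
at most `w j`, then every budget-feasible subset `T` has cardinality at most `|S|`. -/
theorem greedy_max_card_budget_feasible
    {ι : Type*} [Fintype ι] [DecidableEq ι] (w : ι → ℝ) (B : ℝ)
    (hw : ∀ i, 0 ≤ w i)
    (S : Finset ι) (j : ι) (hj : j ∉ S)
    (h1 : ∑ k ∈ S, w k ≤ B)
    (h2 : B < ∑ k ∈ S, w k + w j)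
    (h3 : ∀ i, i ∉ S → w j ≤ w i)
    (h4 : ∀ k ∈ S, w k ≤ w j) :
    ∀ T : Finset ι, ∑ k ∈ T, w k ≤ B → T.card ≤ S.card := by
  intro T hT
  by_contra hlt
  push_neg at hlt
  -- card counting
  have hcard : (S \ T).card + 1 ≤ (T \ S).card := by
    have hST := Finset.card_sdiff_add_card_inter S T
    have hTS := Finset.card_sdiff_add_card_inter T S
    have hI : (S ∩ T).card = (T ∩ S).card := by rw [Finset.inter_comm]
    omega
  have hwj : 0 ≤ w j := hw j
  have key1 : ∑ k ∈ S \ T, w k + w j ≤ ((S \ T).card + 1 : ℕ) * w j := by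
    push_cast
    have : ∑ k ∈ S \ T, w k ≤ (S \ T).card * w j := by
      calc ∑ k ∈ S \ T, w k ≤ ∑ _k ∈ S \ T, w j :=
            Finset.sum_le_sum fun k hk => h4 k (Finset.mem_sdiff.mp hk).1
        _ = (S \ T).card * w j := by rw [Finset.sum_const, nsmul_eq_mul]
    linarith
  have key2 : ((T \ S).card : ℝ) * w j ≤ ∑ k ∈ T \ S, w k := by
    calc ((T \ S).card : ℝ) * w j = ∑ _k ∈ T \ S, w j := by
          rw [Finset.sum_const, nsmul_eq_mul]
      _ ≤ ∑ k ∈ T \ S, w k :=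
          Finset.sum_le_sum fun k hk => h3 k (Finset.mem_sdiff.mp hk).2
  have hmono : (((S \ T).card + 1 : ℕ) : ℝ) * w j ≤ ((T \ S).card : ℝ) * w j := by
    apply mul_le_mul_of_nonneg_right _ hwj
    exact_mod_cast hcard
  have hSsplit : ∑ k ∈ S ∩ T, w k + ∑ k ∈ S \ T, w k = ∑ k ∈ S, w k :=
    Finset.sum_inter_add_sum_sdiff S T w
  have hTsplit : ∑ k ∈ T ∩ S, w k + ∑ k ∈ T \ S, w k = ∑ k ∈ T, w k :=
    Finset.sum_inter_add_sum_sdiff T S w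
  have hinter : ∑ k ∈ S ∩ T, w k = ∑ k ∈ T ∩ S, w k := by
    rw [Finset.inter_comm]
  linarith
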